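/- If a finite set S ⊆ ℕ is down-admissible for v, then S is up-admissible for u := v[S] and u(S) = v. -/

import Mathlib

namespace SL2Tilt

/-- The `i`-th `p`-adic digit of `v`. -/
def dig (p v i : ℕ) : ℕ := v / p ^ i % p

/-- A stretch: a nonempty finite set of consecutive integers. -/
def IsStretch (S : Finset ℕ) : Prop :=
  S.Nonempty ∧ ∀ a ∈ S, ∀ b ∈ S, ∀ c, a ≤ c → c ≤ b → c ∈ S

/-- `S` is down-admissible for `v` (with respect to the prime `p`):
(d1) the digit of `v` at the minimum of each maximal stretch of `S` is nonzero, and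
(d2) if `s ∈ S` and the `(s+1)`-st digit is `0`, then `s + 1 ∈ S`. -/
def DownAdm (p v : ℕ) (S : Finset ℕ) : Prop :=
  (∀ s ∈ S, (s = 0 ∨ s - 1 ∉ S) → dig p v s ≠ 0) ∧
  (∀ s ∈ S, dig p v (s + 1) = 0 → s + 1 ∈ S)

/-- `S` is up-admissible for `v` (with respect to the prime `p`):
(u1) the digit of `v` at the minimum of each maximal stretch of `S` is nonzero, and
(u2) if `s ∈ S` and the `(s+1)`-st digit is `p - 1`, then `s + 1 ∈ S`. -/
def UpAdm (p v : ℕ) (S : Finset ℕ) : Prop :=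
  (∀ s ∈ S, (s = 0 ∨ s - 1 ∉ S) → dig p v s ≠ 0) ∧
  (∀ s ∈ S, dig p v (s + 1) = p - 1 → s + 1 ∈ S)

/-- `v[S] = ∑ᵢ εᵢ aᵢ pⁱ` (εᵢ = -1 for i ∈ S, else 1), as an integer.
All nonzero digits of `v` have index `< v`, so the range `Finset.range v ∪ S` suffices. -/
def vdown (p v : ℕ) (S : Finset ℕ) : ℤ :=
  ∑ i ∈ Finset.range v ∪ S,
    (if i ∈ S then (-1 : ℤ) else 1) * (dig p v i : ℤ) * (p : ℤ) ^ i

/-- `v(S) = ∑ᵢ aᵢ' pⁱ` where `aᵢ' = -aᵢ` if `i ∈ S`, `aᵢ' = aᵢ + 2` if `i ∉ S` and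
`i - 1 ∈ S`, and `aᵢ' = aᵢ` otherwise; as an integer. -/
def vup (p v : ℕ) (S : Finset ℕ) : ℤ :=
  ∑ i ∈ Finset.range v ∪ S ∪ S.image (· + 1),
    (if i ∈ S then -(dig p v i : ℤ)
      else if i - 1 ∈ S then (dig p v i : ℤ) + 2
      else (dig p v i : ℤ)) * (p : ℤ) ^ i

/-- `v[S]` as a natural number. -/
def vdownN (p v : ℕ) (S : Finset ℕ) : ℕ := (vdown p v S).toNat

/-- `v(S)` as a natural number. -/
def vupN (p v : ℕ) (S : Finset ℕ) : ℕ := (vup p v S).toNat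

/-- `fancest' p v s` is `v` with the `p`-adic digits in positions `< s` set to zero.
This is the ancestor `fancest_{s-1}(v)` of the paper: the youngest ancestor of `v`
whose `(s-1)`-st digit is zero (with `fancest' p v 0 = fancest_{-1}(v) = v`). -/
def fancest' (p v s : ℕ) : ℕ := p ^ s * (v / p ^ s)

/-- The scalar `λ_{v,S} = ∏_{s ∈ S} (-1)^(a_s p^s) · fancest_{s-1}(v)[S]± / fancest_s(v)[S]±`. -/
def lam (p v : ℕ) (S : Finset ℕ) : ℚ :=
  ∏ s ∈ S,
    (-1 : ℚ) ^ (dig p v s * p ^ s) *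
      ((vdown p (fancest' p v s) S : ℚ) / (vdown p (fancest' p v (s + 1)) S : ℚ))

/-- The generation of `v` : the number of (matrilineal) ancestors of `v`, i.e. the
number of nonzero `p`-adic digits of `v` minus one. -/
def gen (p v : ℕ) : ℕ :=
  ((Finset.range v).filter (fun i => dig p v i ≠ 0)).card - 1

/-- A minimal down-admissible stretch for `v`: a down-admissible stretch, no proper
nonempty subset of which is down-admissible for `v`. -/
def MinDownStretch (p v : ℕ) (S : Finset ℕ) : Prop :=
  DownAdm p v S ∧ IsStretch S ∧ ∀ T ⊂ S, T.Nonempty → ¬ DownAdm p v T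

/-- A minimal up-admissible stretch for `v`. -/
def MinUpStretch (p v : ℕ) (S : Finset ℕ) : Prop :=
  UpAdm p v S ∧ IsStretch S ∧ ∀ T ⊂ S, T.Nonempty → ¬ UpAdm p v T

/-- `A` and `B` are distant: `d(A,B) > 1`, i.e. `|a - b| > 1` for all `a ∈ A`, `b ∈ B`. -/
def Distant (A B : Finset ℕ) : Prop :=
  ∀ a ∈ A, ∀ b ∈ B, a + 1 < b ∨ b + 1 < a

lemma dig_lt {p : ℕ} (hp : 2 ≤ p) (v i : ℕ) : dig p v i < p :=
  Nat.mod_lt _ (by omega)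

lemma dig_high {p : ℕ} (hp : 2 ≤ p) {w i : ℕ} (h : w ≤ i) : dig p w i = 0 := by
  have h2 : w < p ^ i :=
    lt_of_lt_of_le (lt_of_le_of_lt h (Nat.lt_two_pow_self (n := i))) (Nat.pow_le_pow_left hp i)
  simp [dig, Nat.div_eq_of_lt h2]

def bdig (p v : ℕ) (S : Finset ℕ) (i : ℕ) : ℕ :=
  if i ∈ S then (if i = 0 ∨ i - 1 ∉ S then p - dig p v i else p - 1 - dig p v i)
  else if 0 < i ∧ i - 1 ∈ S then dig p v i - 1 else dig p v i

lemma bdig_lt {p v : ℕ} {S : Finset ℕ} (hp : 2 ≤ p) (h : DownAdm p v S) (i : ℕ) :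
    bdig p v S i < p := by
  have hd := dig_lt hp v i
  unfold bdig
  split
  · rename_i hiS
    split
    · rename_i hst
      have := h.1 i hiS hst
      omega
    · omega
  · split <;> omega

lemma dig_pos_after {p v : ℕ} {S : Finset ℕ} (h : DownAdm p v S) {i : ℕ}
    (hi : i ∉ S) (h1 : 0 < i) (h2 : i - 1 ∈ S) : dig p v i ≠ 0 := by
  intro h0
  have hh := h.2 (i - 1) h2
  rw [Nat.sub_add_cancel h1] at hh
  exact hi (hh h0)

lemma telescope {p v : ℕ} {S : Finset ℕ} (hp : 2 ≤ p) (h : DownAdm p v S) (n : ℕ) :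
    ∑ i ∈ Finset.range n,
      ((bdig p v S i : ℤ) - (if i ∈ S then (-1 : ℤ) else 1) * (dig p v i : ℤ)) * (p : ℤ) ^ i
      = if 0 < n ∧ n - 1 ∈ S then (p : ℤ) ^ n else 0 := by
  induction n with
  | zero => simp
  | succ n ih =>
    rw [Finset.sum_range_succ, ih]
    have hd := dig_lt hp v n
    by_cases hnS : n ∈ S
    · by_cases hstart : n = 0 ∨ n - 1 ∉ S
      · have hprev : ¬(0 < n ∧ n - 1 ∈ S) := by
          rcases hstart with h0 | h0
          · omega
          · tauto
        have hfin : 0 < n + 1 ∧ n + 1 - 1 ∈ S := by simpa using hnS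
        rw [if_neg hprev, if_pos hfin]
        unfold bdig
        rw [if_pos hnS, if_pos hstart, Nat.cast_sub hd.le, if_pos hnS, pow_succ']
        ring
      · push_neg at hstart
        have hprev : 0 < n ∧ n - 1 ∈ S := ⟨by omega, hstart.2⟩
        have hfin : 0 < n + 1 ∧ n + 1 - 1 ∈ S := by simpa using hnS
        rw [if_pos hprev, if_pos hfin]
        unfold bdig
        rw [if_pos hnS, if_neg (by push_neg; exact hstart),
          Nat.cast_sub (by omega), Nat.cast_sub (by omega), Nat.cast_one, if_pos hnS, pow_succ']
        ring
    · have hfin : ¬(0 < n + 1 ∧ n + 1 - 1 ∈ S) := by simpa using hnS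
      rw [if_neg hfin]
      by_cases hc : 0 < n ∧ n - 1 ∈ S
      · have hpos := dig_pos_after h hnS hc.1 hc.2
        rw [if_pos hc]
        unfold bdig
        rw [if_neg hnS, if_pos hc, Nat.cast_sub (by omega), Nat.cast_one, if_neg hnS]
        ring
      · rw [if_neg hc]
        unfold bdig
        rw [if_neg hnS, if_neg hc, if_neg hnS]
        ring

lemma dig_sum {p : ℕ} (hp : 2 ≤ p) :
    ∀ (k N : ℕ) (b : ℕ → ℕ), (∀ i, b i < p) →
      dig p (∑ i ∈ Finset.range N, b i * p ^ i) k = if k < N then b k else 0 := by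
  intro k
  induction k with
  | zero =>
    intro N b hb
    cases N with
    | zero => simp [dig]
    | succ n =>
      rw [Finset.sum_range_succ']
      simp only [pow_zero, mul_one]
      unfold dig
      simp only [pow_zero, Nat.div_one]
      have hsum : ∑ i ∈ Finset.range n, b (i + 1) * p ^ (i + 1)
          = p * ∑ i ∈ Finset.range n, b (i + 1) * p ^ i := by
        rw [Finset.mul_sum]
        apply Finset.sum_congr rfl
        intro i _
        ring
      rw [hsum, if_pos (Nat.succ_pos n), Nat.mul_add_mod, Nat.mod_eq_of_lt (hb 0)]
  | succ k ih =>
    intro N b hb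
    cases N with
    | zero => simp [dig]
    | succ n =>
      have key : (∑ i ∈ Finset.range (n + 1), b i * p ^ i) / p
          = ∑ i ∈ Finset.range n, b (i + 1) * p ^ i := by
        rw [Finset.sum_range_succ']
        simp only [pow_zero, mul_one]
        have hsum : ∑ i ∈ Finset.range n, b (i + 1) * p ^ (i + 1)
            = p * ∑ i ∈ Finset.range n, b (i + 1) * p ^ i := by
          rw [Finset.mul_sum]
          apply Finset.sum_congr rfl
          intro i _
          ring
        rw [hsum, Nat.mul_add_div (by omega), Nat.div_eq_of_lt (hb 0), add_zero]
      have step : dig p (∑ i ∈ Finset.range (n + 1), b i * p ^ i) (k + 1)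
          = dig p ((∑ i ∈ Finset.range (n + 1), b i * p ^ i) / p) k := by
        unfold dig
        rw [Nat.div_div_eq_div_mul, ← pow_succ']
      rw [step, key, ih n (fun i => b (i + 1)) (fun i => hb (i + 1))]
      by_cases hk : k < n
      · rw [if_pos hk, if_pos (by omega)]
      · rw [if_neg hk, if_neg (by omega)]

lemma sum_dig {p : ℕ} (hp : 2 ≤ p) (v : ℕ) :
    ∀ n, ∑ i ∈ Finset.range n, dig p v i * p ^ i = v % p ^ n := by
  intro n
  induction n with
  | zero => simp [Nat.mod_one]
  | succ n ih =>
    rw [Finset.sum_range_succ, ih, Nat.mod_pow_succ]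
    unfold dig
    ring

/-- If `S` is down-admissible for `v`, then `S` is up-admissible for `u = v[S]`
and `u(S) = v`. -/
theorem stmt5 (p v : ℕ) (hp : p.Prime) (hv : 1 ≤ v) (S : Finset ℕ)
    (h : DownAdm p v S) :
    UpAdm p (vdownN p v S) S ∧ vupN p (vdownN p v S) S = v := by
  have hp2 : 2 ≤ p := hp.two_le
  set N := v + S.sup id + 2 with hN
  have hSN : ∀ s ∈ S, s + 1 < N := by
    intro s hs
    have := Finset.le_sup (f := id) hs
    simp only [id] at this
    omega
  have hsub : Finset.range v ∪ S ⊆ Finset.range N := by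
    intro i hi
    simp only [Finset.mem_union, Finset.mem_range] at hi ⊢
    rcases hi with h1 | h1
    · omega
    · have := hSN i h1; omega
  have hvd : vdown p v S = ∑ i ∈ Finset.range N,
      (if i ∈ S then (-1 : ℤ) else 1) * (dig p v i : ℤ) * (p : ℤ) ^ i := by
    unfold vdown
    apply Finset.sum_subset hsub
    intro i _ hi
    simp only [Finset.mem_union, Finset.mem_range, not_or, not_lt] at hi
    rw [dig_high hp2 hi.1]
    simp
  have hNS : ¬(0 < N ∧ N - 1 ∈ S) := by
    rintro ⟨h1, h2⟩
    have := hSN _ h2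
    omega
  have htelN := telescope hp2 h N
  rw [if_neg hNS] at htelN
  simp only [sub_mul, Finset.sum_sub_distrib, sub_eq_zero] at htelN
  have hvdb : vdown p v S = ∑ i ∈ Finset.range N, (bdig p v S i : ℤ) * (p : ℤ) ^ i := by
    rw [hvd, ← htelN]
  set u := vdownN p v S with hu
  have hub : u = ∑ i ∈ Finset.range N, bdig p v S i * p ^ i := by
    have hcast : ((∑ i ∈ Finset.range N, bdig p v S i * p ^ i : ℕ) : ℤ)
        = ∑ i ∈ Finset.range N, (bdig p v S i : ℤ) * (p : ℤ) ^ i := by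
      push_cast
      rfl
    rw [hu]
    unfold vdownN
    rw [hvdb, ← hcast, Int.toNat_natCast]
  have hdigu : ∀ k, dig p u k = bdig p v S k := by
    intro k
    rw [hub, dig_sum hp2 k N _ (bdig_lt hp2 h)]
    by_cases hk : k < N
    · rw [if_pos hk]
    · rw [if_neg hk]
      have h1 : k ∉ S := fun hs => by have := hSN k hs; omega
      have h2 : ¬(0 < k ∧ k - 1 ∈ S) := by
        rintro ⟨hh, hs⟩
        have := hSN _ hs
        omega
      unfold bdig
      rw [if_neg h1, if_neg h2, dig_high hp2 (by omega)]
  constructor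
  · constructor
    · intro s hs hstart
      rw [hdigu]
      unfold bdig
      rw [if_pos hs, if_pos hstart]
      have := dig_lt hp2 v s
      omega
    · intro s hs hd1
      by_contra hns
      rw [hdigu] at hd1
      have hcond : 0 < s + 1 ∧ s + 1 - 1 ∈ S := by simpa using hs
      unfold bdig at hd1
      rw [if_neg hns, if_pos hcond] at hd1
      have := dig_lt hp2 v (s + 1)
      omega
  · set N' := N + u + 1 with hN'
    have hsub2 : Finset.range u ∪ S ∪ S.image (· + 1) ⊆ Finset.range N' := by
      intro i hi
      simp only [Finset.mem_union, Finset.mem_range, Finset.mem_image] at hi ⊢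
      rcases hi with (h1 | h1) | h1
      · omega
      · have := hSN i h1; omega
      · obtain ⟨a, ha, rfl⟩ := h1
        have := hSN a ha
        omega
    have hvup : vup p u S = ∑ i ∈ Finset.range N',
        (if i ∈ S then -(dig p u i : ℤ)
          else if i - 1 ∈ S then (dig p u i : ℤ) + 2
          else (dig p u i : ℤ)) * (p : ℤ) ^ i := by
      unfold vup
      apply Finset.sum_subset hsub2
      intro i _ hi
      simp only [Finset.mem_union, Finset.mem_range, Finset.mem_image, not_or, not_exists,
        not_and, not_lt] at hi
      obtain ⟨⟨hiu, hiS⟩, him⟩ := hi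
      have hi1 : i - 1 ∉ S := by
        intro hs
        rcases Nat.eq_zero_or_pos i with h0 | h0
        · subst h0
          simp only [Nat.zero_sub] at hs
          exact hiS hs
        · exact him (i - 1) hs (by omega)
      rw [if_neg hiS, if_neg hi1, dig_high hp2 hiu]
      simp
    have hpt : ∀ i, (if i ∈ S then -(bdig p v S i : ℤ)
          else if i - 1 ∈ S then (bdig p v S i : ℤ) + 2
          else (bdig p v S i : ℤ))
        = (dig p v i : ℤ) + (if i ∈ S then (-1 : ℤ) else 1) * (dig p v i : ℤ)
          - (bdig p v S i : ℤ) := by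
      intro i
      by_cases hiS : i ∈ S
      · rw [if_pos hiS, if_pos hiS]
        ring
      · rw [if_neg hiS, if_neg hiS]
        by_cases hi1 : i - 1 ∈ S
        · have h0 : 0 < i := by
            rcases Nat.eq_zero_or_pos i with h0 | h0
            · exfalso
              apply hiS
              simpa [h0] using hi1
            · exact h0
          rw [if_pos hi1]
          have hb : bdig p v S i = dig p v i - 1 := by
            unfold bdig
            rw [if_neg hiS, if_pos ⟨h0, hi1⟩]
          have hpos := dig_pos_after h hiS h0 hi1
          rw [hb, Nat.cast_sub (by omega), Nat.cast_one]
          ring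
        · rw [if_neg hi1]
          have hb : bdig p v S i = dig p v i := by
            unfold bdig
            rw [if_neg hiS, if_neg (by tauto)]
          rw [hb]
          ring
    have hsplit : vup p u S = (∑ i ∈ Finset.range N', (dig p v i : ℤ) * (p : ℤ) ^ i)
        + ((∑ i ∈ Finset.range N', (if i ∈ S then (-1 : ℤ) else 1) * (dig p v i : ℤ) * (p : ℤ) ^ i)
          - ∑ i ∈ Finset.range N', (bdig p v S i : ℤ) * (p : ℤ) ^ i) := by
      rw [hvup, ← Finset.sum_sub_distrib, ← Finset.sum_add_distrib]
      apply Finset.sum_congr rfl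
      intro i _
      rw [hdigu i, hpt i]
      ring
    have hN'S : ¬(0 < N' ∧ N' - 1 ∈ S) := by
      rintro ⟨h1, h2⟩
      have := hSN _ h2
      omega
    have htelN' := telescope hp2 h N'
    rw [if_neg hN'S] at htelN'
    simp only [sub_mul, Finset.sum_sub_distrib, sub_eq_zero] at htelN'
    have h1 : (∑ i ∈ Finset.range N', (dig p v i : ℤ) * (p : ℤ) ^ i) = (v : ℤ) := by
      have hsd := sum_dig hp2 v N'
      have hvlt : v < p ^ N' :=
        lt_of_lt_of_le (lt_of_le_of_lt (by omega : v ≤ N') (Nat.lt_two_pow_self (n := N')))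
          (Nat.pow_le_pow_left hp2 N')
      rw [Nat.mod_eq_of_lt hvlt] at hsd
      calc (∑ i ∈ Finset.range N', (dig p v i : ℤ) * (p : ℤ) ^ i)
          = ((∑ i ∈ Finset.range N', dig p v i * p ^ i : ℕ) : ℤ) := by push_cast; rfl
        _ = (v : ℤ) := by rw [hsd]
    rw [hu]
    unfold vupN
    rw [hsplit, ← htelN', sub_self, add_zero, h1, Int.toNat_natCast]


end SL2Tilt
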